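/- If a Lévy measure Λ on ℝ satisfies σ(ε)/ε → ∞ as ε → 0⁺ (where σ(ε)² = ∫_{|s|≤ε} s² dΛ(s)), then ∫_{|s|>1} |s| dΛ̃_ε(s) → 0 as ε → 0⁺, where Λ̃_ε(B) := Λ(σ(ε)B ∩ (-ε,ε)). -/
import Mathlib

open MeasureTheory Real Set Filter

theorem rescaled_levy_big_jumps_vanish
    (Λ : Measure ℝ)
    (hΛ : ∫⁻ s, ENNReal.ofReal (min (s ^ 2) 1) ∂Λ < ⊤)
    (σ : ℝ → ℝ)
    (hσpos : ∀ ε : ℝ, 0 < ε → 0 < σ ε)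
    (hσdef : ∀ ε : ℝ, 0 < ε →
      (σ ε) ^ 2 = (∫⁻ s in {s : ℝ | |s| ≤ ε}, ENNReal.ofReal (s ^ 2) ∂Λ).toReal)
    (hratio : Tendsto (fun ε : ℝ => σ ε / ε) (nhdsWithin 0 (Ioi 0)) atTop) :
    Tendsto (fun ε : ℝ =>
        ∫ s in {s : ℝ | 1 < |s|}, |s|
          ∂((Λ.restrict (Ioo (-ε) ε)).map (fun s => s / σ ε)))
      (nhdsWithin 0 (Ioi 0)) (nhds 0) := by
  have h := hratio.eventually_gt_atTop 1
  apply Tendsto.congr' ?_ tendsto_const_nhds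
  filter_upwards [h, self_mem_nhdsWithin] with ε hε hε0
  have hε0 : (0 : ℝ) < ε := hε0
  have hσ := hσpos ε hε0
  symm
  have hεσ : ε < σ ε := by
    have := (one_lt_div hε0).mp hε
    linarith
  have hmap : ((Λ.restrict (Ioo (-ε) ε)).map (fun s => s / σ ε)) {s : ℝ | 1 < |s|} = 0 := by
    rw [Measure.map_apply (measurable_div_const (σ ε)) ((isOpen_lt continuous_const continuous_abs).measurableSet),
      Measure.restrict_apply ((isOpen_lt continuous_const continuous_abs).measurableSet.preimage (measurable_div_const (σ ε)))]
    have hempty : (fun s => s / σ ε) ⁻¹' {s : ℝ | 1 < |s|} ∩ Ioo (-ε) ε = ∅ := by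
      ext s
      simp only [mem_inter_iff, mem_preimage, mem_setOf_eq, mem_Ioo, mem_empty_iff_false,
      iff_false, not_and]
      intro h1 h2 h3
      have habs : |s| < ε := abs_lt.mpr ⟨h2, h3⟩
      have : 1 < |s| / σ ε := by
        rwa [abs_div, abs_of_pos hσ] at h1
      have : σ ε < |s| := by
        have := (one_lt_div hσ).mp this
        linarith
      linarith
    rw [hempty, measure_empty]
  rw [Measure.restrict_eq_zero.mpr hmap, integral_zero_measure]
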